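/- Fix H ∈ (0,1) and t > 0. The function y ↦ -(y/√(2π)) ∫₀ᵗ ∫₀ˢ (s-r)^{-3H} exp(-y²/(2(s-r)^{2H})) dr ds is continuous at every y ≠ 0, and (when H < 1/2 the inner integrals converge for y = 0 as well) the function extends continuously by 0 at y = 0 if and only if H < 1/2. -/

import Mathlib

/-!
Put `c = |y| ^ (1/H)`, so that `c ^ (2H) = y ^ 2`. The substitution `u = c v` turns the
integrand `u ^ (-3H) exp (-y² / (2 u ^ (2H)))` into `c ^ (-3H)` times the same integrand at
`y = 1`, so the double integral equals `c ^ (2 - 3H) K (t / c)`, where `K` is the second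
primitive of `φ v = v ^ (-3H) exp (-1 / (2 v ^ (2H)))`. This gives continuity away from `0`,
and `|F y| = t ^ (2 - 2H) / √(2π) · K x / x ^ (2 - 2H)` with `x = t / c → ∞` as `y → 0`.
Since `φ v ≤ C v ^ (-β)` for every `β ≤ 3H`, `K x = O(x ^ (2 - β))` when `β < 1`; for
`H < 1/2` a `β > 2H` is available and `F → 0`. Conversely `K x ≥ (x - 1) K' 1` with
`K' 1 > 0`, which is not `o(x ^ (2 - 2H))` once `H ≥ 1/2`.
-/

open Real MeasureTheory Filter Set Topology

lemma rpow_le_rpow_mul_exp_half {p w : ℝ} (hp : 0 ≤ p) (hw : 0 ≤ w) :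
    w ^ p ≤ (2 * p) ^ p * exp (w / 2) := by
  rcases hp.eq_or_lt with rfl | hp
  · simp only [rpow_zero, mul_zero, one_mul, one_le_exp_iff]
    positivity
  · calc w ^ p = (2 * p) ^ p * (w / (2 * p)) ^ p := by
          rw [← mul_rpow (by positivity) (by positivity), mul_div_cancel₀ _ (by positivity)]
      _ ≤ (2 * p) ^ p * exp (w / (2 * p)) ^ p := by
          gcongr
          linarith [add_one_le_exp (w / (2 * p))]
      _ = (2 * p) ^ p * exp (w / 2) := by
          rw [← exp_mul]
          field_simp

lemma rpow_mul_exp_neg_inv_rpow_le {H b v : ℝ} (hH : 0 < H) (hb : b ≤ 0) (hv : 0 < v) :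
    v ^ b * exp (-1 / (2 * v ^ (2 * H))) ≤ (-b / H) ^ (-b / (2 * H)) := by
  have hw : 0 < v ^ (-(2 * H)) := rpow_pos_of_pos hv _
  have hpow : v ^ b = (v ^ (-(2 * H))) ^ (-b / (2 * H)) := by
    rw [← rpow_mul hv.le]
    congr 1
    field_simp
  have hexp : exp (-1 / (2 * v ^ (2 * H))) = (exp (v ^ (-(2 * H)) / 2))⁻¹ := by
    rw [← exp_neg, rpow_neg hv.le]
    congr 1
    field_simp
  rw [hpow, hexp, mul_inv_le_iff₀ (exp_pos _), show -b / H = 2 * (-b / (2 * H)) by field_simp]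
  exact rpow_le_rpow_mul_exp_half (div_nonneg (neg_nonneg.mpr hb) (by positivity)) hw.le

noncomputable section

def kernel (H y u : ℝ) : ℝ := u ^ (-(3 * H)) * exp (-y ^ 2 / (2 * u ^ (2 * H)))

def kernelPrimitive (H x : ℝ) : ℝ := ∫ v in 0..x, kernel H 1 v

def kernelSecondPrimitive (H x : ℝ) : ℝ := ∫ w in 0..x, kernelPrimitive H w

def timeScale (H y : ℝ) : ℝ := |y| ^ H⁻¹

-- `E[∂α'_t(y)]` for fractional Brownian motion with Hurst index `H`
def localTimeDerivMean (H t y : ℝ) : ℝ :=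
  -(y / √(2 * π)) * ∫ s in Ioc 0 t, ∫ r in Ioc 0 s, kernel H y (s - r)

end

section Kernel

variable {H : ℝ}

lemma kernel_nonneg (y : ℝ) {v : ℝ} (hv : 0 ≤ v) : 0 ≤ kernel H y v :=
  mul_nonneg (rpow_nonneg hv _) (exp_pos _).le

lemma kernel_pos (y : ℝ) {v : ℝ} (hv : 0 < v) : 0 < kernel H y v :=
  mul_pos (rpow_pos_of_pos hv _) (exp_pos _)

-- `0 ^ a = 0` for `a ≠ 0` in Mathlib's convention.
lemma kernel_zero_right (hH : H ≠ 0) (y : ℝ) : kernel H y 0 = 0 := by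
  simp [kernel, hH]

lemma kernel_one_le {β v : ℝ} (hH : 0 < H) (hβ : β ≤ 3 * H) (hv : 0 ≤ v) :
    kernel H 1 v ≤ ((3 * H - β) / H) ^ ((3 * H - β) / (2 * H)) * v ^ (-β) := by
  rcases hv.eq_or_lt with rfl | hv
  · rw [kernel_zero_right hH.ne']
    positivity
  have h := rpow_mul_exp_neg_inv_rpow_le hH (b := β - 3 * H) (by linarith) hv
  rw [neg_sub] at h
  calc kernel H 1 v = v ^ (-β) * (v ^ (β - 3 * H) * exp (-1 / (2 * v ^ (2 * H)))) := by
        rw [kernel, ← mul_assoc, ← rpow_add hv, one_pow]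
        ring_nf
    _ ≤ _ := by
        rw [mul_comm _ (v ^ (-β))]
        gcongr

lemma intervalIntegrable_kernel_one (hH : 0 < H) {x : ℝ} (hx : 0 ≤ x) :
    IntervalIntegrable (kernel H 1) volume 0 x := by
  have hmeas : Measurable (kernel H 1) := by unfold kernel; fun_prop
  refine (intervalIntegrable_const (c := (3 * H / H) ^ (3 * H / (2 * H)))).mono_fun'
    hmeas.aestronglyMeasurable ((ae_restrict_iff' measurableSet_uIoc).mpr (ae_of_all _ ?_))
  intro v hv
  rw [uIoc_of_le hx] at hv
  dsimp only
  rw [norm_of_nonneg (kernel_nonneg 1 hv.1.le)]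
  simpa using kernel_one_le hH (β := 0) (by linarith) hv.1.le

lemma timeScale_pos (H : ℝ) {y : ℝ} (hy : y ≠ 0) : 0 < timeScale H y :=
  rpow_pos_of_pos (abs_pos.mpr hy) _

lemma timeScale_rpow_mul (hH : H ≠ 0) (y a : ℝ) : timeScale H y ^ (H * a) = |y| ^ a := by
  rw [timeScale, ← rpow_mul (abs_nonneg y), inv_mul_cancel_left₀ hH]

lemma kernel_timeScale_mul (hH : H ≠ 0) {y v : ℝ} (hy : y ≠ 0) (hv : 0 ≤ v) :
    kernel H y (timeScale H y * v) = timeScale H y ^ (-(3 * H)) * kernel H 1 v := by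
  have hc := timeScale_pos H hy
  rcases hv.eq_or_lt with rfl | hv
  · simp [kernel_zero_right hH]
  have hc2 : timeScale H y ^ (2 * H) = y ^ 2 := by
    rw [mul_comm, timeScale_rpow_mul hH, rpow_two, sq_abs]
  have hv2 : v ^ (2 * H) ≠ 0 := (rpow_pos_of_pos hv _).ne'
  rw [kernel, kernel, mul_rpow hc.le hv.le, mul_rpow hc.le hv.le, hc2, one_pow,
    show -y ^ 2 / (2 * (y ^ 2 * v ^ (2 * H))) = -1 / (2 * v ^ (2 * H)) by field_simp]
  ring

end Kernel

section Primitives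

variable {H : ℝ}

lemma kernelPrimitive_nonneg {x : ℝ} (hx : 0 ≤ x) : 0 ≤ kernelPrimitive H x :=
  intervalIntegral.integral_nonneg hx fun _ hv => kernel_nonneg 1 hv.1

lemma kernelSecondPrimitive_nonneg {x : ℝ} (hx : 0 ≤ x) : 0 ≤ kernelSecondPrimitive H x :=
  intervalIntegral.integral_nonneg hx fun _ hw => kernelPrimitive_nonneg hw.1

lemma monotoneOn_kernelPrimitive (hH : 0 < H) : MonotoneOn (kernelPrimitive H) (Ici 0) :=
  fun _ ha _ _ hab => intervalIntegral.integral_mono_interval le_rfl ha hab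
    ((ae_restrict_iff' measurableSet_Ioc).mpr (ae_of_all _ fun _ hv => kernel_nonneg 1 hv.1.le))
    (intervalIntegrable_kernel_one hH (le_trans ha hab))

lemma intervalIntegrable_kernelPrimitive (hH : 0 < H) {a b : ℝ} (ha : 0 ≤ a) (hb : 0 ≤ b) :
    IntervalIntegrable (kernelPrimitive H) volume a b :=
  ((monotoneOn_kernelPrimitive hH).mono fun _ hw => le_trans (le_min ha hb) hw.1).intervalIntegrable

lemma kernelPrimitive_one_pos (hH : 0 < H) : 0 < kernelPrimitive H 1 :=
  intervalIntegral.intervalIntegral_pos_of_pos_on (intervalIntegrable_kernel_one hH zero_le_one)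
    (fun _ hv => kernel_pos 1 hv.1) one_pos

lemma continuousAt_kernelSecondPrimitive (hH : 0 < H) {x : ℝ} (hx : 0 < x) :
    ContinuousAt (kernelSecondPrimitive H) x := by
  have h := intervalIntegral.continuousOn_primitive_interval'
    (intervalIntegrable_kernelPrimitive hH le_rfl (by linarith : (0 : ℝ) ≤ x + 1)) left_mem_uIcc
  rw [uIcc_of_le (by linarith)] at h
  exact h.continuousAt (Icc_mem_nhds hx (lt_add_one x))

lemma integral_le_of_le_mul_rpow {f : ℝ → ℝ} {C a x : ℝ} (ha : -1 < a) (hx : 0 ≤ x)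
    (hf : IntervalIntegrable f volume 0 x) (hle : ∀ v ∈ Icc 0 x, f v ≤ C * v ^ a) :
    ∫ v in 0..x, f v ≤ C / (a + 1) * x ^ (a + 1) :=
  calc ∫ v in 0..x, f v ≤ ∫ v in 0..x, C * v ^ a :=
        intervalIntegral.integral_mono_on hx hf
          ((intervalIntegral.intervalIntegrable_rpow' ha).const_mul C) hle
    _ = C / (a + 1) * x ^ (a + 1) := by
        rw [intervalIntegral.integral_const_mul, integral_rpow (Or.inl ha),
          zero_rpow (by linarith), sub_zero]
        ring

lemma exists_kernelSecondPrimitive_le (hH : 0 < H) {β : ℝ} (hβH : β ≤ 3 * H)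
    (hβ1 : β < 1) :
    ∃ C, ∀ x, 0 ≤ x → kernelSecondPrimitive H x ≤ C * x ^ (2 - β) := by
  set M := ((3 * H - β) / H) ^ ((3 * H - β) / (2 * H))
  have hJ : ∀ x, 0 ≤ x → kernelPrimitive H x ≤ M / (-β + 1) * x ^ (-β + 1) := fun x hx =>
    integral_le_of_le_mul_rpow (by linarith) hx (intervalIntegrable_kernel_one hH hx)
      fun v hv => kernel_one_le hH hβH hv.1
  refine ⟨M / (-β + 1) / (2 - β), fun x hx => ?_⟩
  have hK := integral_le_of_le_mul_rpow (by linarith) hx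
    (intervalIntegrable_kernelPrimitive hH le_rfl hx) fun w hw => hJ w hw.1
  rwa [show -β + 1 + 1 = 2 - β by ring] at hK

lemma sub_one_mul_kernelPrimitive_one_le (hH : 0 < H) {x : ℝ} (hx : 1 ≤ x) :
    (x - 1) * kernelPrimitive H 1 ≤ kernelSecondPrimitive H x :=
  calc (x - 1) * kernelPrimitive H 1 = ∫ _ in 1..x, kernelPrimitive H 1 := by simp
    _ ≤ ∫ w in 1..x, kernelPrimitive H w :=
        intervalIntegral.integral_mono_on hx intervalIntegrable_const
          (intervalIntegrable_kernelPrimitive hH zero_le_one (by linarith))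
          fun w hw => monotoneOn_kernelPrimitive hH (mem_Ici.2 zero_le_one)
            (mem_Ici.2 (by linarith [hw.1])) hw.1
    _ ≤ kernelSecondPrimitive H x :=
        intervalIntegral.integral_mono_interval zero_le_one hx le_rfl
          ((ae_restrict_iff' measurableSet_Ioc).mpr
            (ae_of_all _ fun _ hw => kernelPrimitive_nonneg hw.1.le))
          (intervalIntegrable_kernelPrimitive hH le_rfl (by linarith))

lemma tendsto_kernelSecondPrimitive_div_rpow (hH0 : 0 < H) (hH : H < 1 / 2) :
    Tendsto (fun x => kernelSecondPrimitive H x / x ^ (2 - 2 * H)) atTop (𝓝 0) := by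
  -- any `β` with `2H < β < 1` and `β ≤ 3H` will do
  set β := min (3 * H) (H + 1 / 2)
  have hβ2H : 2 * H < β := lt_min (by linarith) (by linarith)
  obtain ⟨C, hC⟩ := exists_kernelSecondPrimitive_le hH0 (min_le_left _ _)
    ((min_le_right _ _).trans_lt (by linarith) : β < 1)
  have hlim : Tendsto (fun x : ℝ => C * x ^ (-(β - 2 * H))) atTop (𝓝 0) := by
    simpa using (tendsto_rpow_neg_atTop (by linarith : 0 < β - 2 * H)).const_mul C
  refine squeeze_zero' ?_ ?_ hlim
  · filter_upwards [eventually_ge_atTop 0] with x hx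
    exact div_nonneg (kernelSecondPrimitive_nonneg hx) (rpow_nonneg hx _)
  · filter_upwards [eventually_gt_atTop 0] with x hx
    rw [div_le_iff₀ (rpow_pos_of_pos hx _), mul_assoc, ← rpow_add hx,
      show -(β - 2 * H) + (2 - 2 * H) = 2 - β by ring]
    exact hC x hx.le

lemma kernelPrimitive_one_div_two_le (hH : 1 / 2 ≤ H) {x : ℝ} (hx : 2 ≤ x) :
    kernelPrimitive H 1 / 2 ≤ kernelSecondPrimitive H x / x ^ (2 - 2 * H) := by
  have hJ := (kernelPrimitive_one_pos (by linarith : 0 < H)).le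
  have hxpow : x ^ (2 - 2 * H) ≤ x := by
    simpa using rpow_le_rpow_of_exponent_le (by linarith : 1 ≤ x) (by linarith : 2 - 2 * H ≤ 1)
  rw [le_div_iff₀ (by positivity)]
  calc kernelPrimitive H 1 / 2 * x ^ (2 - 2 * H) ≤ kernelPrimitive H 1 / 2 * x := by gcongr
    _ ≤ (x - 1) * kernelPrimitive H 1 := by nlinarith
    _ ≤ kernelSecondPrimitive H x :=
        sub_one_mul_kernelPrimitive_one_le (by linarith) (by linarith)

end Primitives

section ClosedForm

variable {H t y : ℝ}

lemma integral_kernel_sub (hH : H ≠ 0) (hy : y ≠ 0) {s : ℝ} (hs : 0 ≤ s) :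
    ∫ r in Ioc 0 s, kernel H y (s - r) =
      timeScale H y ^ (1 - 3 * H) * kernelPrimitive H (s / timeScale H y) := by
  set c := timeScale H y
  have hc : 0 < c := timeScale_pos H hy
  have hsc : 0 ≤ s / c := by positivity
  calc ∫ r in Ioc 0 s, kernel H y (s - r) = ∫ u in 0..s, kernel H y u := by
        rw [← intervalIntegral.integral_of_le hs]
        simp
    _ = c • ∫ v in 0..s / c, kernel H y (c * v) := by
        rw [intervalIntegral.smul_integral_comp_mul_left, mul_zero, mul_div_cancel₀ _ hc.ne']
    _ = c • ∫ v in 0..s / c, c ^ (-(3 * H)) * kernel H 1 v := by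
        refine congrArg _ (intervalIntegral.integral_congr fun v hv => ?_)
        rw [uIcc_of_le hsc] at hv
        exact kernel_timeScale_mul hH hy hv.1
    _ = c ^ (1 - 3 * H) * kernelPrimitive H (s / c) := by
        rw [intervalIntegral.integral_const_mul, smul_eq_mul, ← mul_assoc, sub_eq_add_neg,
          rpow_add hc, rpow_one]
        rfl

lemma integral_integral_kernel_sub (hH : H ≠ 0) (hy : y ≠ 0) (ht : 0 ≤ t) :
    ∫ s in Ioc 0 t, ∫ r in Ioc 0 s, kernel H y (s - r) =
      timeScale H y ^ (2 - 3 * H) * kernelSecondPrimitive H (t / timeScale H y) := by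
  set c := timeScale H y
  have hc : 0 < c := timeScale_pos H hy
  calc ∫ s in Ioc 0 t, ∫ r in Ioc 0 s, kernel H y (s - r)
        = ∫ s in 0..t, c ^ (1 - 3 * H) * kernelPrimitive H (s / c) := by
        rw [intervalIntegral.integral_of_le ht]
        exact setIntegral_congr_fun measurableSet_Ioc fun s hs => integral_kernel_sub hH hy hs.1.le
    _ = c ^ (1 - 3 * H) * (c • ∫ w in 0..t / c, kernelPrimitive H w) := by
        rw [intervalIntegral.integral_const_mul, intervalIntegral.integral_comp_div _ hc.ne',
          zero_div]
    _ = c ^ (2 - 3 * H) * kernelSecondPrimitive H (t / c) := by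
        rw [smul_eq_mul, ← mul_assoc, show 2 - 3 * H = 1 - 3 * H + 1 by ring,
          rpow_add_one hc.ne']
        rfl

lemma localTimeDerivMean_eq (hH : H ≠ 0) (ht : 0 ≤ t) (hy : y ≠ 0) :
    localTimeDerivMean H t y = -(y / √(2 * π)) *
      (timeScale H y ^ (2 - 3 * H) * kernelSecondPrimitive H (t / timeScale H y)) := by
  rw [localTimeDerivMean, integral_integral_kernel_sub hH hy ht]

lemma abs_localTimeDerivMean (hH : H ≠ 0) (ht : 0 < t) (hy : y ≠ 0) :
    |localTimeDerivMean H t y| = t ^ (2 - 2 * H) / √(2 * π) *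
      (kernelSecondPrimitive H (t / timeScale H y) / (t / timeScale H y) ^ (2 - 2 * H)) := by
  rw [localTimeDerivMean_eq hH ht.le hy]
  set c := timeScale H y
  have hc : 0 < c := timeScale_pos H hy
  have hπ : 0 < √(2 * π) := by positivity
  have hK := kernelSecondPrimitive_nonneg (H := H) (div_pos ht hc).le
  have hyc : |y| = c ^ H := by simpa using (timeScale_rpow_mul hH y 1).symm
  have hcc : c ^ H * c ^ (2 - 3 * H) = c ^ (2 - 2 * H) := by
    rw [← rpow_add hc]
    ring_nf
  rw [abs_mul, abs_neg, abs_div, abs_of_pos hπ,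
    abs_of_nonneg (mul_nonneg (rpow_nonneg hc.le _) hK), hyc,
    div_rpow ht.le hc.le, ← hcc]
  field_simp

lemma continuousAt_localTimeDerivMean (hH : 0 < H) (ht : 0 < t) (hy : y ≠ 0) :
    ContinuousAt (localTimeDerivMean H t) y := by
  have hc0 := timeScale_pos H hy
  have hc : ContinuousAt (timeScale H) y :=
    continuous_abs.continuousAt.rpow_const (Or.inl (abs_ne_zero.mpr hy))
  have hx : ContinuousAt (fun z => t / timeScale H z) y := continuousAt_const.div hc hc0.ne'
  have hK : ContinuousAt (fun z => kernelSecondPrimitive H (t / timeScale H z)) y :=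
    (continuousAt_kernelSecondPrimitive hH (div_pos ht hc0)).comp
      (f := fun z => t / timeScale H z) hx
  refine ContinuousAt.congr ?_ ((eventually_ne_nhds hy).mono fun z hz =>
    (localTimeDerivMean_eq hH.ne' ht.le hz).symm)
  exact (continuousAt_id.div_const _).neg.mul ((hc.rpow_const (Or.inl hc0.ne')).mul hK)

lemma tendsto_div_timeScale_atTop (hH : 0 < H) (ht : 0 < t) :
    Tendsto (fun y => t / timeScale H y) (𝓝[≠] 0) atTop := by
  have h0 : Tendsto (timeScale H) (𝓝[≠] 0) (𝓝[>] 0) := by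
    refine tendsto_nhdsWithin_iff.mpr ⟨?_, ?_⟩
    · have := (continuous_abs.tendsto (0 : ℝ)).rpow_const (Or.inr (inv_nonneg.2 hH.le))
      unfold timeScale
      simpa [zero_rpow (inv_ne_zero hH.ne')] using this.mono_left nhdsWithin_le_nhds
    · filter_upwards [self_mem_nhdsWithin] with y hy using timeScale_pos H hy
  simpa [div_eq_mul_inv] using (tendsto_inv_nhdsGT_zero.comp h0).const_mul_atTop ht

lemma tendsto_localTimeDerivMean_iff (hH : 0 < H) (ht : 0 < t) :
    Tendsto (localTimeDerivMean H t) (𝓝 0) (𝓝 0) ↔ H < 1 / 2 := by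
  set A := t ^ (2 - 2 * H) / √(2 * π)
  have hA : 0 < A := by positivity
  have hx := tendsto_div_timeScale_atTop hH ht
  have hF0 : localTimeDerivMean H t 0 = 0 := by simp [localTimeDerivMean]
  have hpunct : Tendsto (localTimeDerivMean H t) (𝓝 0) (𝓝 0) ↔
      Tendsto (localTimeDerivMean H t) (𝓝[≠] 0) (𝓝 0) := by
    simpa [ContinuousAt, ContinuousWithinAt, hF0] using
      (continuousWithinAt_compl_self (f := localTimeDerivMean H t) (x := 0)).symm
  have habs : ∀ᶠ y in 𝓝[≠] (0 : ℝ), |localTimeDerivMean H t y| =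
      A * (kernelSecondPrimitive H (t / timeScale H y) / (t / timeScale H y) ^ (2 - 2 * H)) :=
    eventually_mem_nhdsWithin.mono fun y hy => abs_localTimeDerivMean hH.ne' ht hy
  rw [hpunct, tendsto_zero_iff_abs_tendsto_zero, Function.comp_def, tendsto_congr' habs]
  constructor
  · intro h
    by_contra! hH2
    have hlow := ge_of_tendsto h <| (hx.eventually_ge_atTop 2).mono fun y hy =>
      mul_le_mul_of_nonneg_left (kernelPrimitive_one_div_two_le hH2 hy) hA.le
    have := kernelPrimitive_one_pos hH
    nlinarith
  · intro hH2
    simpa using ((tendsto_kernelSecondPrimitive_div_rpow hH hH2).comp hx).const_mul A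

end ClosedForm

theorem stmt_12_general (H t : ℝ) (hH0 : 0 < H) (ht : 0 < t)
    (F : ℝ → ℝ)
    (hF : ∀ y, F y = -(y / Real.sqrt (2 * Real.pi)) *
      ∫ s in Set.Ioc (0:ℝ) t, ∫ r in Set.Ioc (0:ℝ) s,
        (s - r) ^ (-(3 * H)) * Real.exp (-y ^ 2 / (2 * (s - r) ^ (2 * H)))) :
    (∀ y : ℝ, y ≠ 0 → ContinuousAt F y) ∧
    (Tendsto F (nhds 0) (nhds 0) ↔ H < 1 / 2) := by
  obtain rfl : F = localTimeDerivMean H t := funext hF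
  exact ⟨fun y hy => continuousAt_localTimeDerivMean hH0 ht hy,
    tendsto_localTimeDerivMean_iff hH0 ht⟩

theorem stmt_12 (H t : ℝ) (hH0 : 0 < H) (hH1 : H < 1) (ht : 0 < t)
    (F : ℝ → ℝ)
    (hF : ∀ y, F y = -(y / Real.sqrt (2 * Real.pi)) *
      ∫ s in Set.Ioc (0:ℝ) t, ∫ r in Set.Ioc (0:ℝ) s,
        (s - r) ^ (-(3 * H)) * Real.exp (-y ^ 2 / (2 * (s - r) ^ (2 * H)))) :
    (∀ y : ℝ, y ≠ 0 → ContinuousAt F y) ∧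
    (Tendsto F (nhds 0) (nhds 0) ↔ H < 1 / 2) :=
  stmt_12_general H t hH0 ht F hF
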